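/- Let R be an h-local Prüfer domain and let I, J be nonzero divisorial ideals of R. Then I + J is divisorial, and for arbitrary nonzero ideals I, J of R, (I + J)^v = I^v + J^v. -/

import Mathlib

open scoped nonZeroDivisors

noncomputable section

variable (R : Type*) [CommRing R] [IsDomain R]

abbrev LocAt (M : Ideal R) (hM : M.IsPrime) : Type _ :=
  Localization (@Ideal.primeCompl R _ M hM)

def MapAt (M : Ideal R) (hM : M.IsPrime) (I : Ideal R) : Ideal (LocAt R M hM) :=
  I.map (algebraMap R (LocAt R M hM))

def divClos (I : Ideal R) : FractionalIdeal R⁰ (FractionRing R) :=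
  1 / (1 / (I : FractionalIdeal R⁰ (FractionRing R)))

def Divisorial (I : Ideal R) : Prop :=
  divClos R I = (I : FractionalIdeal R⁰ (FractionRing R))

def DivisorialLoc (M : Ideal R) (hM : M.IsPrime) (A : Ideal (LocAt R M hM)) : Prop :=
  haveI : IsDomain (LocAt R M hM) :=
    IsLocalization.isDomain_localization (by haveI := hM; exact Ideal.primeCompl_le_nonZeroDivisors M)
  Divisorial (LocAt R M hM) A

def DivisorialAt (M : Ideal R) (hM : M.IsPrime) (I : Ideal R) : Prop :=
  DivisorialLoc R M hM (MapAt R M hM I)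

def IsPruferDomain : Prop :=
  ∀ I : Ideal R, I ≠ ⊥ → I.FG → IsUnit (I : FractionalIdeal R⁰ (FractionRing R))

def FiniteCharacter : Prop :=
  ∀ x : R, x ≠ 0 → {M : Ideal R | M.IsMaximal ∧ x ∈ M}.Finite

def HLocal : Prop :=
  FiniteCharacter R ∧
    ∀ P : Ideal R, P.IsPrime → P ≠ ⊥ → ∃! M : Ideal R, M.IsMaximal ∧ P ≤ M

def WeakFactorization : Prop :=
  ∀ I : Ideal R, I ≠ ⊥ → ∃ l : Multiset (Ideal R), (∀ M ∈ l, M.IsMaximal) ∧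
    (I : FractionalIdeal R⁰ (FractionRing R)) =
      divClos R I * (l.map (fun M => (M : FractionalIdeal R⁰ (FractionRing R)))).prod

def MSet (I : Ideal R) : Set (Ideal R) :=
  {M | ∃ h : M.IsMaximal, I ≤ M ∧ ¬ Divisorial R M ∧ ¬ DivisorialAt R M h.isPrime I}

def StrongFactorization : Prop :=
  letI := Classical.decEq (Ideal R)
  ∀ I : Ideal R, I ≠ ⊥ → ∃ S : Finset (Ideal R), ↑S = MSet R I ∧
    (I : FractionalIdeal R⁰ (FractionRing R)) =
      divClos R I * ∏ M ∈ S, (M : FractionalIdeal R⁰ (FractionRing R)) ∧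
    ∀ M ∈ S, (I : FractionalIdeal R⁰ (FractionRing R)) ≠
      divClos R I * ∏ N ∈ S.erase M, (N : FractionalIdeal R⁰ (FractionRing R))

def AlmostDedekind : Prop :=
  ∀ (M : Ideal R) (hM : M.IsMaximal),
    haveI : IsDomain (LocAt R M hM.isPrime) :=
      IsLocalization.isDomain_localization
        (by haveI := hM.isPrime; exact Ideal.primeCompl_le_nonZeroDivisors M)
    IsDiscreteValuationRing (LocAt R M hM.isPrime)

def vIdeal (I : Ideal R) : Ideal R :=
  Submodule.comap (Algebra.linearMap R (FractionRing R))
    (divClos R I : Submodule R (FractionRing R))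

def traceIdeal (I : Ideal R) : Ideal R :=
  Submodule.comap (Algebra.linearMap R (FractionRing R))
    (((I : FractionalIdeal R⁰ (FractionRing R)) *
        (1 / (I : FractionalIdeal R⁰ (FractionRing R))) :
      FractionalIdeal R⁰ (FractionRing R)) : Submodule R (FractionRing R))
section Aux

variable {R}

local notation "K" => FractionRing R

/-- `x` is in the saturation of `A` at `M`. -/
def InSat (M : Ideal R) (A : Submodule R K) (x : K) : Prop :=
  ∃ s, s ∉ M ∧ s • x ∈ A

lemma InSat.mono {M : Ideal R} {A B : Submodule R K} (h : A ≤ B) {x : K}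
    (hx : InSat M A x) : InSat M B x := by
  obtain ⟨s, hs, hsx⟩ := hx
  exact ⟨s, hs, h hsx⟩

lemma inSat_of_mem {M : Ideal R} (hM : M ≠ ⊤) {A : Submodule R K} {x : K}
    (hx : x ∈ A) : InSat M A x :=
  ⟨1, fun h => hM (Ideal.eq_top_of_isUnit_mem _ h isUnit_one), by simpa using hx⟩

/-- Glueing: if `x` is in the saturation of `A` at every maximal ideal then `x ∈ A`. -/
lemma mem_of_forall_inSat {A : Submodule R K} {x : K}
    (h : ∀ M : Ideal R, M.IsMaximal → InSat M A x) : x ∈ A := by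
  set D : Ideal R := A.comap (LinearMap.toSpanSingleton R K x) with hD
  have hmem : ∀ r : R, r ∈ D ↔ r • x ∈ A := fun r => Iff.rfl
  by_cases hDtop : D = ⊤
  · have : (1 : R) ∈ D := hDtop ▸ Submodule.mem_top
    simpa using (hmem 1).mp this
  · obtain ⟨M, hM, hDM⟩ := Ideal.exists_le_maximal D hDtop
    obtain ⟨s, hs, hsx⟩ := h M hM
    exact absurd (hDM ((hmem s).mpr hsx)) hs

/-- key h-local lemma: the saturation at `M` of a nonzero ideal `C` is not contained
in a maximal ideal `N ≠ M`. -/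
lemma hlocal_sat (hH : HLocal R) {C : Ideal R} (hC : C ≠ ⊥) {M N : Ideal R}
    (hM : M.IsMaximal) (hN : N.IsMaximal) (hMN : M ≠ N)
    (hsub : ∀ r : R, (∃ s, s ∉ M ∧ s * r ∈ C) → r ∈ N) : False := by
  have h1M : (1 : R) ∉ M := fun h => hM.ne_top (Ideal.eq_top_of_isUnit_mem _ h isUnit_one)
  have h1N : (1 : R) ∉ N := fun h => hN.ne_top (Ideal.eq_top_of_isUnit_mem _ h isUnit_one)
  set T : Submonoid R :=
    { carrier := {x | ∃ s t, s ∉ M ∧ t ∉ N ∧ s * t = x}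
      one_mem' := ⟨1, 1, h1M, h1N, mul_one 1⟩
      mul_mem' := by
        rintro a b ⟨s₁, t₁, hs₁, ht₁, rfl⟩ ⟨s₂, t₂, hs₂, ht₂, rfl⟩
        refine ⟨s₁ * s₂, t₁ * t₂, fun h => ?_, fun h => ?_, by ring⟩
        · exact (hM.isPrime.mem_or_mem h).elim hs₁ hs₂
        · exact (hN.isPrime.mem_or_mem h).elim ht₁ ht₂ } with hT
  have hdisj : Disjoint (C : Set R) (T : Set R) := by
    rw [Set.disjoint_left]
    rintro x hxC ⟨s, t, hs, ht, rfl⟩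
    exact ht (hsub t ⟨s, hs, hxC⟩)
  obtain ⟨P, hPp, hCP, hPT⟩ := Ideal.exists_le_prime_disjoint C T hdisj
  have hPM : P ≤ M := by
    intro r hr
    by_contra hrM
    exact Set.disjoint_left.mp hPT hr ⟨r, 1, hrM, h1N, mul_one r⟩
  have hPN : P ≤ N := by
    intro r hr
    by_contra hrN
    exact Set.disjoint_left.mp hPT hr ⟨1, r, h1M, hrN, one_mul r⟩
  have hPbot : P ≠ ⊥ := fun h => hC (le_bot_iff.mp (h ▸ hCP))
  obtain ⟨Mx, -, huniq⟩ := hH.2 P hPp hPbot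
  exact hMN ((huniq M ⟨hM, hPM⟩).trans (huniq N ⟨hN, hPN⟩).symm)

/-- The saturation of an ideal `C` at a maximal ideal `N`, as an ideal. -/
def satIdealAux (N : Ideal R) (hN : N.IsMaximal) (C : Ideal R) : Ideal R where
  carrier := {r | ∃ s, s ∉ N ∧ s * r ∈ C}
  zero_mem' := ⟨1, fun h => hN.ne_top (Ideal.eq_top_of_isUnit_mem _ h isUnit_one),
    by simpa using C.zero_mem⟩
  add_mem' := by
    rintro a b ⟨s, hs, hsa⟩ ⟨t, ht, htb⟩
    refine ⟨s * t, fun h => (hN.isPrime.mem_or_mem h).elim hs ht, ?_⟩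
    have : s * t * (a + b) = t * (s * a) + s * (t * b) := by ring
    rw [this]
    exact C.add_mem (C.mul_mem_left _ hsa) (C.mul_mem_left _ htb)
  smul_mem' := by
    rintro c r ⟨s, hs, hsr⟩
    refine ⟨s, hs, ?_⟩
    have : s * (c • r) = c * (s * r) := by simp [smul_eq_mul]; ring
    rw [this]
    exact C.mul_mem_left _ hsr

open Classical in
noncomputable def satIdeal (N : Ideal R) (C : Ideal R) : Ideal R :=
  if h : N.IsMaximal then satIdealAux N h C else ⊤

lemma satIdeal_eq (N : Ideal R) (hN : N.IsMaximal) (C : Ideal R) :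
    satIdeal N C = satIdealAux N hN C := by
  rw [satIdeal, dif_pos hN]

/-- The key conductor lemma: in an h-local domain, a fractional submodule locally
integral at `M` has a denominator outside `M`. -/
lemma conductor_step (hH : HLocal R) {B : Submodule R (FractionRing R)} 
    (hfr : ∃ q : R, q ≠ 0 ∧ ∀ b ∈ B, q • b ∈ (1 : Submodule R (FractionRing R)))
    {M : Ideal R} (hM : M.IsMaximal) (h : ∀ b ∈ B, InSat M 1 b) :
    ∃ s, s ∉ M ∧ ∀ b ∈ B, s • b ∈ (1 : Submodule R (FractionRing R)) := by
  classical
  obtain ⟨q, hq0, hqB⟩ := hfr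
  set C : Ideal R :=
    ⨅ b ∈ B, (1 : Submodule R (FractionRing R)).comap (LinearMap.toSpanSingleton R _ b) with hC
  have hmemC : ∀ r : R, r ∈ C ↔ ∀ b ∈ B, r • b ∈ (1 : Submodule R (FractionRing R)) := by
    intro r
    simp [hC, Submodule.mem_iInf, LinearMap.toSpanSingleton_apply]
  suffices hCM : ¬ C ≤ M by
    obtain ⟨s, hsC, hsM⟩ := SetLike.not_le_iff_exists.mp hCM
    exact ⟨s, hsM, (hmemC s).mp hsC⟩
  intro hCM
  have hqC : q ∈ C := (hmemC q).mpr hqB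
  have hCbot : C ≠ ⊥ := fun hb => hq0 (by simpa [hb] using hqC)
  have hfin : {N : Ideal R | N.IsMaximal ∧ C ≤ N ∧ N ≠ M}.Finite :=
    (hH.1 q hq0).subset (fun N hN => ⟨hN.1, hN.2.1 hqC⟩)
  set T : Finset (Ideal R) := hfin.toFinset with hT
  have hEC : T.inf (fun N => satIdeal N C) ≤ C := by
    intro r hr
    refine (hmemC r).mpr (fun b hb => ?_)
    apply mem_of_forall_inSat
    intro N' hN'
    by_cases hNM : N' = M
    · subst hNM
      obtain ⟨s, hs, hsb⟩ := h b hb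
      exact ⟨s, hs, by rw [smul_comm]; exact Submodule.smul_mem _ _ hsb⟩
    · by_cases hCN : C ≤ N'
      · have hNT : N' ∈ T := hfin.mem_toFinset.mpr ⟨hN', hCN, hNM⟩
        have hrN : r ∈ satIdeal N' C := Finset.inf_le (f := fun N => satIdeal N C) hNT hr
        rw [satIdeal_eq N' hN'] at hrN
        obtain ⟨s, hs, hsr⟩ := hrN
        refine ⟨s, hs, ?_⟩
        have hss : s • (r • b) = (s * r) • b := (mul_smul s r b).symm
        rw [hss]
        exact (hmemC _).mp hsr b hb
      · obtain ⟨s, hsC, hsN⟩ := SetLike.not_le_iff_exists.mp hCN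
        refine ⟨s, hsN, ?_⟩
        rw [smul_comm]
        exact Submodule.smul_mem _ _ ((hmemC s).mp hsC b hb)
  have hEM : T.inf (fun N => satIdeal N C) ≤ M := hEC.trans hCM
  obtain ⟨N, hNT, hNle⟩ := (Ideal.IsPrime.inf_le' hM.isPrime).mp hEM
  rw [hT, hfin.mem_toFinset] at hNT
  obtain ⟨hNmax, hCN, hNM⟩ := hNT
  rw [satIdeal_eq N hNmax] at hNle
  exact hlocal_sat hH hCbot hNmax hM hNM (fun r hr => hNle hr)

/-- In a Prüfer domain, every element of `K` or its inverse is locally integral. -/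
lemma prufer_cases (hR : IsPruferDomain R) {M : Ideal R} (hM : M.IsMaximal)
    {u : FractionRing R} (hu : u ≠ 0) : InSat M 1 u ∨ InSat M 1 u⁻¹ := by
  obtain ⟨p, q, hq, hpq⟩ := IsFractionRing.div_surjective (A := R) u
  set p' := algebraMap R (FractionRing R) p with hp'
  set q' := algebraMap R (FractionRing R) q with hq'
  have hq0 : q ≠ 0 := mem_nonZeroDivisors_iff_ne_zero.mp hq
  have hinj := IsFractionRing.injective R (FractionRing R)
  have hq'0 : q' ≠ 0 := fun h => hq0 ((map_eq_zero_iff _ hinj).mp h)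
  have hp0 : p ≠ 0 := by
    rintro rfl
    apply hu
    rw [← hpq, hp']
    simp
  have hp'0 : p' ≠ 0 := fun h => hp0 ((map_eq_zero_iff _ hinj).mp h)
  set F : Ideal R := Ideal.span {p, q} with hF
  have hFbot : F ≠ ⊥ := by
    intro hbot
    have hpF : p ∈ F := Ideal.subset_span (by simp)
    rw [hbot] at hpF
    exact hp0 (by simpa using hpF)
  have hFG : F.FG := Submodule.fg_span (Set.toFinite _)
  obtain ⟨v, hv⟩ := hR F hFbot hFG
  have hmul : (F : FractionalIdeal R⁰ (FractionRing R)) * ↑v⁻¹ = 1 := by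
    rw [← hv]; exact v.mul_inv
  set D : Submodule R (FractionRing R) :=
    (((v⁻¹ : (FractionalIdeal R⁰ (FractionRing R))ˣ) :
      FractionalIdeal R⁰ (FractionRing R)) : Submodule R (FractionRing R)) with hD
  have hsub : (↑(↑F : FractionalIdeal R⁰ (FractionRing R)) : Submodule R (FractionRing R)) * D
      = 1 := by
    have hc := congrArg
      (fun X : FractionalIdeal R⁰ (FractionRing R) => (X : Submodule R (FractionRing R))) hmul
    simpa using hc
  have hspan : (↑(↑F : FractionalIdeal R⁰ (FractionRing R)) : Submodule R (FractionRing R))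
      = Submodule.span R {p', q'} := by
    rw [FractionalIdeal.coe_coeIdeal, hF, IsLocalization.coeSubmodule_span]
    congr 1
    rw [Set.image_insert_eq, Set.image_singleton]
  have hone : (1 : FractionRing R) ∈ Submodule.span R {p', q'} * D := by
    rw [← hspan, hsub]
    exact Submodule.mem_one.mpr ⟨1, map_one _⟩
  rw [Submodule.span_insert, Submodule.sup_mul] at hone
  obtain ⟨y, hy, z, hz, hyz⟩ := Submodule.mem_sup.mp hone
  obtain ⟨α, hα, hα'⟩ := Submodule.mem_span_singleton_mul.mp hy
  obtain ⟨β, hβ, hβ'⟩ := Submodule.mem_span_singleton_mul.mp hz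
  have hpF' : p' ∈ (↑(↑F : FractionalIdeal R⁰ (FractionRing R)) : Submodule R (FractionRing R)) :=
    hspan ▸ Submodule.subset_span (by simp)
  have hqF' : q' ∈ (↑(↑F : FractionalIdeal R⁰ (FractionRing R)) : Submodule R (FractionRing R)) :=
    hspan ▸ Submodule.subset_span (by simp)
  have hpα : p' * α ∈ (1 : Submodule R (FractionRing R)) := by
    rw [← hsub]; exact Submodule.mul_mem_mul hpF' hα
  have hqβ : q' * β ∈ (1 : Submodule R (FractionRing R)) := by
    rw [← hsub]; exact Submodule.mul_mem_mul hqF' hβ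
  obtain ⟨γ, hγ⟩ := Submodule.mem_one.mp hpα
  obtain ⟨δ, hδ⟩ := Submodule.mem_one.mp hqβ
  have hγδ : γ + δ = 1 := by
    apply hinj
    rw [map_add, map_one, hγ, hδ, hα', hβ', hyz]
  have hM1 : (1 : R) ∉ M := fun h => hM.ne_top (Ideal.eq_top_of_isUnit_mem _ h isUnit_one)
  have hcase : γ ∉ M ∨ δ ∉ M := by
    by_contra hcon
    push_neg at hcon
    exact hM1 (hγδ ▸ M.add_mem hcon.1 hcon.2)
  rcases hcase with hγM | hδM
  · right
    refine ⟨γ, hγM, ?_⟩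
    have heq : γ • u⁻¹ = q' * α := by
      rw [Algebra.smul_def, hγ, ← hpq, inv_div]
      field_simp
    rw [heq, ← hsub]
    exact Submodule.mul_mem_mul hqF' hα
  · left
    refine ⟨δ, hδM, ?_⟩
    have heq : δ • u = p' * β := by
      rw [Algebra.smul_def, hδ, ← hpq]
      field_simp
    rw [heq, ← hsub]
    exact Submodule.mul_mem_mul hpF' hβ

lemma inSat_mul {M : Ideal R} (hMp : M.IsPrime) {A : Submodule R (FractionRing R)}
    {z x : FractionRing R} (hz : InSat M 1 z) (hx : InSat M A x) : InSat M A (z * x) := by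
  obtain ⟨s, hs, hsz⟩ := hz
  obtain ⟨t, ht, htx⟩ := hx
  obtain ⟨r, hr⟩ := Submodule.mem_one.mp hsz
  refine ⟨s * t, fun h => (hMp.mem_or_mem h).elim hs ht, ?_⟩
  have heq : (s * t) • (z * x) = r • (t • x) := by
    rw [← smul_mul_smul_comm, ← hr]
    simp [Algebra.smul_def]
  rw [heq]
  exact Submodule.smul_mem _ _ htx

lemma sat_cmp (hR : IsPruferDomain R) {M : Ideal R} (hM : M.IsMaximal)
    (A B : Submodule R (FractionRing R)) :
    (∀ x, InSat M A x → InSat M B x) ∨ (∀ x, InSat M B x → InSat M A x) := by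
  by_contra hc
  push_neg at hc
  obtain ⟨⟨a, haA, haB⟩, ⟨b, hbB, hbA⟩⟩ := hc
  have hM1 : M ≠ ⊤ := hM.ne_top
  have ha0 : a ≠ 0 := by rintro rfl; exact haB (inSat_of_mem hM1 (Submodule.zero_mem _))
  have hb0 : b ≠ 0 := by rintro rfl; exact hbA (inSat_of_mem hM1 (Submodule.zero_mem _))
  rcases prufer_cases hR hM (u := a * b⁻¹) (mul_ne_zero ha0 (inv_ne_zero hb0)) with hcase | hcase
  · have h1 : InSat M B ((a * b⁻¹) * b) := inSat_mul hM.isPrime hcase hbB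
    rw [mul_assoc, inv_mul_cancel₀ hb0, mul_one] at h1
    exact haB h1
  · have h2 : (a * b⁻¹)⁻¹ = b * a⁻¹ := by
      rw [mul_inv, inv_inv, mul_comm]
    rw [h2] at hcase
    have h1 : InSat M A ((b * a⁻¹) * a) := inSat_mul hM.isPrime hcase haA
    rw [mul_assoc, inv_mul_cancel₀ ha0, mul_one] at h1
    exact hbA h1

lemma div_sup_eq (A B : Submodule R (FractionRing R)) :
    (1 : Submodule R (FractionRing R)) / (A ⊔ B) = 1 / A ⊓ 1 / B := by
  ext x
  simp only [Submodule.mem_div_iff_forall_mul_mem, Submodule.mem_inf]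
  constructor
  · exact fun h => ⟨fun y hy => h y (Submodule.mem_sup_left hy),
      fun y hy => h y (Submodule.mem_sup_right hy)⟩
  · rintro ⟨h1, h2⟩ y hy
    obtain ⟨a, ha, b, hb, rfl⟩ := Submodule.mem_sup.mp hy
    rw [mul_add]
    exact Submodule.add_mem _ (h1 a ha) (h2 b hb)

lemma one_div_inf (hR : IsPruferDomain R) (hH : HLocal R) {A B : Submodule R (FractionRing R)}
    (hA : A ≠ ⊥) (hB : B ≠ ⊥)
    (hAf : ∃ q : R, q ≠ 0 ∧ ∀ a ∈ A, q • a ∈ (1 : Submodule R (FractionRing R)))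
    (hBf : ∃ q : R, q ≠ 0 ∧ ∀ b ∈ B, q • b ∈ (1 : Submodule R (FractionRing R))) :
    (1 : Submodule R (FractionRing R)) / (A ⊓ B) = 1 / A ⊔ 1 / B := by
  have key : ∀ (A B : Submodule R (FractionRing R)), B ≠ ⊥ →
      (∃ q : R, q ≠ 0 ∧ ∀ b ∈ B, q • b ∈ (1 : Submodule R (FractionRing R))) →
      ∀ (M : Ideal R), M.IsMaximal →
      (∀ y, InSat M B y → InSat M A y) →
      ∀ x : FractionRing R, x ≠ 0 → x ∈ (1 : Submodule R (FractionRing R)) / (A ⊓ B) →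
      InSat M (1 / B) x := by
    intro A B hB hBf M hM hcmp x hx0 hx
    obtain ⟨qB, hqB0, hqB⟩ := hBf
    set B' : Submodule R (FractionRing R) := B.map (LinearMap.mulLeft R x) with hB'
    have hmemB' : ∀ b', b' ∈ B' ↔ ∃ b ∈ B, x * b = b' := by
      intro b'
      simp [hB', Submodule.mem_map, LinearMap.mulLeft_apply]
    have hfr' : ∃ q : R, q ≠ 0 ∧ ∀ b' ∈ B', q • b' ∈ (1 : Submodule R (FractionRing R)) := by
      obtain ⟨qx, hqx⟩ := IsLocalization.exists_integer_multiple R⁰ x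
      obtain ⟨c, hc⟩ := hqx
      refine ⟨↑qx * qB, mul_ne_zero (mem_nonZeroDivisors_iff_ne_zero.mp qx.2) hqB0, ?_⟩
      rintro b' hb'
      obtain ⟨b, hb, rfl⟩ := (hmemB' b').mp hb'
      have heq : (↑qx * qB) • (x * b) = c • (qB • b) := by
        rw [← smul_mul_smul_comm, ← hc]
        simp [Algebra.smul_def]
      rw [heq]
      obtain ⟨r, hr⟩ := Submodule.mem_one.mp (hqB b hb)
      rw [← hr]
      exact Submodule.mem_one.mpr ⟨c * r, by simp [map_mul, Algebra.smul_def]⟩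
    have hloc : ∀ b' ∈ B', InSat M 1 b' := by
      rintro b' hb'
      obtain ⟨b, hb, rfl⟩ := (hmemB' b').mp hb'
      obtain ⟨s, hs, hsb⟩ := hcmp b (inSat_of_mem hM.ne_top hb)
      have hsbAB : s • b ∈ A ⊓ B := ⟨hsb, Submodule.smul_mem _ _ hb⟩
      refine ⟨s, hs, ?_⟩
      have heq : s • (x * b) = x * (s • b) := (mul_smul_comm s x b).symm
      rw [heq]
      exact Submodule.mem_div_iff_forall_mul_mem.mp hx _ hsbAB
    have hB'bot : B' ≠ ⊥ := by
      rw [Submodule.ne_bot_iff]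
      obtain ⟨b, hb, hb0⟩ := (Submodule.ne_bot_iff _).mp hB
      exact ⟨x * b, (hmemB' _).mpr ⟨b, hb, rfl⟩, mul_ne_zero hx0 hb0⟩
    obtain ⟨s, hsM, hs⟩ := conductor_step hH hfr' hM hloc
    refine ⟨s, hsM, ?_⟩
    rw [Submodule.mem_div_iff_forall_mul_mem]
    intro b hb
    have heq : (s • x) * b = s • (x * b) := smul_mul_assoc s x b
    rw [heq]
    exact hs _ ((hmemB' _).mpr ⟨b, hb, rfl⟩)
  apply le_antisymm
  · intro x hx
    apply mem_of_forall_inSat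
    intro M hM
    by_cases hx0 : x = 0
    · exact inSat_of_mem hM.ne_top (by simp [hx0])
    rcases sat_cmp hR hM A B with hcmp | hcmp
    · have hx' : x ∈ (1 : Submodule R (FractionRing R)) / (B ⊓ A) := by rwa [inf_comm]
      exact InSat.mono le_sup_left (key B A hA hAf M hM hcmp x hx0 hx')
    · exact InSat.mono le_sup_right (key A B hB hBf M hM hcmp x hx0 hx)
  · refine sup_le ?_ ?_ <;> intro x hx <;>
      rw [Submodule.mem_div_iff_forall_mul_mem] at hx ⊢ <;> intro y hy
    · exact hx y hy.1
    · exact hx y hy.2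

lemma div_coeIdeal_facts {I : Ideal R} (hI : I ≠ ⊥) :
    (1 : Submodule R (FractionRing R)) /
        ((I : FractionalIdeal R⁰ (FractionRing R)) : Submodule R (FractionRing R)) ≠ ⊥ ∧
      ∃ q : R, q ≠ 0 ∧ ∀ a ∈ (1 : Submodule R (FractionRing R)) /
        ((I : FractionalIdeal R⁰ (FractionRing R)) : Submodule R (FractionRing R)),
        q • a ∈ (1 : Submodule R (FractionRing R)) := by
  have hmem : ∀ x : FractionRing R,
      x ∈ ((I : FractionalIdeal R⁰ (FractionRing R)) : Submodule R (FractionRing R)) ↔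
        ∃ i ∈ I, algebraMap R (FractionRing R) i = x := by
    intro x
    rw [FractionalIdeal.mem_coe, FractionalIdeal.mem_coeIdeal]
  constructor
  · have h1 : (1 : FractionRing R) ∈ (1 : Submodule R (FractionRing R)) /
        ((I : FractionalIdeal R⁰ (FractionRing R)) : Submodule R (FractionRing R)) := by
      rw [Submodule.mem_div_iff_forall_mul_mem]
      intro y hy
      obtain ⟨i, -, rfl⟩ := (hmem y).mp hy
      rw [one_mul]
      exact Submodule.mem_one.mpr ⟨i, rfl⟩
    intro hbot
    rw [hbot] at h1
    exact one_ne_zero ((Submodule.mem_bot _).mp h1)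
  · obtain ⟨i₀, hi₀, hi₀0⟩ := (Submodule.ne_bot_iff I).mp hI
    refine ⟨i₀, hi₀0, fun a ha => ?_⟩
    have h2 : a * algebraMap R (FractionRing R) i₀ ∈ (1 : Submodule R (FractionRing R)) :=
      Submodule.mem_div_iff_forall_mul_mem.mp ha _ ((hmem _).mpr ⟨i₀, hi₀, rfl⟩)
    rwa [Algebra.smul_def, mul_comm]

lemma one_div_coeIdeal_ne_zero {I : Ideal R} (hI : I ≠ ⊥) :
    1 / (I : FractionalIdeal R⁰ (FractionRing R)) ≠ 0 := by
  have h1 : (1 : FractionalIdeal R⁰ (FractionRing R)) ≤ 1 / ↑I := by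
    rw [FractionalIdeal.le_div_iff_mul_le (FractionalIdeal.coeIdeal_ne_zero.mpr hI), one_mul]
    exact FractionalIdeal.coeIdeal_le_one
  intro h0
  rw [h0] at h1
  have : (1 : FractionRing R) ∈ (0 : FractionalIdeal R⁰ (FractionRing R)) :=
    h1 (FractionalIdeal.one_mem_one _)
  exact one_ne_zero ((FractionalIdeal.mem_zero_iff _).mp this)

lemma main_divClos (hR : IsPruferDomain R) (hH : HLocal R) (I J : Ideal R)
    (hI : I ≠ ⊥) (hJ : J ≠ ⊥) :
    divClos R (I + J) = divClos R I + divClos R J := by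
  have hIJ : I + J ≠ ⊥ := by
    intro h
    exact hI (le_bot_iff.mp (h ▸ (le_sup_left : I ≤ I ⊔ J)))
  have hcI : (I : FractionalIdeal R⁰ (FractionRing R)) ≠ 0 :=
    FractionalIdeal.coeIdeal_ne_zero.mpr hI
  have hcJ : (J : FractionalIdeal R⁰ (FractionRing R)) ≠ 0 :=
    FractionalIdeal.coeIdeal_ne_zero.mpr hJ
  have hcIJ : ((I + J : Ideal R) : FractionalIdeal R⁰ (FractionRing R)) ≠ 0 :=
    FractionalIdeal.coeIdeal_ne_zero.mpr hIJ
  have hdI : 1 / (I : FractionalIdeal R⁰ (FractionRing R)) ≠ 0 := one_div_coeIdeal_ne_zero hI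
  have hdJ : 1 / (J : FractionalIdeal R⁰ (FractionRing R)) ≠ 0 := one_div_coeIdeal_ne_zero hJ
  have hdIJ : 1 / ((I + J : Ideal R) : FractionalIdeal R⁰ (FractionRing R)) ≠ 0 :=
    one_div_coeIdeal_ne_zero hIJ
  apply FractionalIdeal.coeToSubmodule_injective
  rw [divClos, divClos, divClos]
  beta_reduce
  rw [FractionalIdeal.coe_add,
    FractionalIdeal.coe_div hdIJ, FractionalIdeal.coe_div hcIJ,
    FractionalIdeal.coe_div hdI, FractionalIdeal.coe_div hcI,
    FractionalIdeal.coe_div hdJ, FractionalIdeal.coe_div hcJ,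
    FractionalIdeal.coe_one]
  have hcoesum : (((I + J : Ideal R) : FractionalIdeal R⁰ (FractionRing R)) :
      Submodule R (FractionRing R)) =
      ((I : FractionalIdeal R⁰ (FractionRing R)) : Submodule R (FractionRing R)) ⊔
      ((J : FractionalIdeal R⁰ (FractionRing R)) : Submodule R (FractionRing R)) := by
    rw [show (I + J : Ideal R) = I ⊔ J from Submodule.add_eq_sup I J,
      FractionalIdeal.coeIdeal_sup, FractionalIdeal.coe_add, Submodule.add_eq_sup]
  rw [hcoesum, div_sup_eq]
  obtain ⟨hAne, hAf⟩ := div_coeIdeal_facts hI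
  obtain ⟨hBne, hBf⟩ := div_coeIdeal_facts hJ
  rw [one_div_inf hR hH hAne hBne hAf hBf, Submodule.add_eq_sup]

end Aux

/-- In an h-local Prüfer domain, the sum of two nonzero divisorial ideals is divisorial,
and `(I + J)^v = I^v + J^v` for all nonzero ideals. -/
theorem stmt18 (hR : IsPruferDomain R) (hH : HLocal R) :
    (∀ I J : Ideal R, I ≠ ⊥ → J ≠ ⊥ → Divisorial R I → Divisorial R J →
      Divisorial R (I + J)) ∧
    ∀ I J : Ideal R, I ≠ ⊥ → J ≠ ⊥ →
      divClos R (I + J) = divClos R I + divClos R J := by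
  refine ⟨?_, fun I J hI hJ => main_divClos hR hH I J hI hJ⟩
  intro I J hI hJ hDI hDJ
  unfold Divisorial at hDI hDJ ⊢
  rw [main_divClos hR hH I J hI hJ, hDI, hDJ,
    show (I + J : Ideal R) = I ⊔ J from Submodule.add_eq_sup I J,
    FractionalIdeal.coeIdeal_sup]
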